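/- arXiv:2106.07171 — 5 statements merged into one kernel-verified Lean document; each statement's English description precedes it below -/
import Mathlib

section
/- Suppose two joint distributions p_train and p_ideal on 𝒳 × 𝒴 satisfy p_train(Y|X=x) = p_ideal(Y|X=x) for all x in the support of p_train (covariate shift only). If T_ideal is a sufficient statistic of X for Y under p_ideal, then for every x in the support of p_train and every y, p_train(y | T_ideal(x)) = p_ideal(y | T_ideal(x)). -/
open Finset

noncomputable section

variable {𝒳 𝒴 𝒯 : Type*}

/-- Marginal distribution of `X` under the joint distribution `p`. -/
def margX [Fintype 𝒴] (p : 𝒳 → 𝒴 → ℝ) (x : 𝒳) : ℝ := ∑ y, p x y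

/-- Probability that the statistic `T(X) = t`. -/
def probT [Fintype 𝒳] [Fintype 𝒴] [DecidableEq 𝒯] (p : 𝒳 → 𝒴 → ℝ) (f : 𝒳 → 𝒯) (t : 𝒯) : ℝ :=
  ∑ x, if f x = t then margX p x else 0

/-- Joint probability that `Y = y` and `T(X) = t`. -/
def probYT [Fintype 𝒳] [DecidableEq 𝒯] (p : 𝒳 → 𝒴 → ℝ) (f : 𝒳 → 𝒯) (y : 𝒴) (t : 𝒯) : ℝ :=
  ∑ x, if f x = t then p x y else 0

/-- `T` is a sufficient statistic of `X` for `Y`: `p(y | T(x), x) = p(y | T(x))`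
(conditioning on `(T(x), x)` is conditioning on `x`, since `T` is deterministic). -/
def Sufficient [Fintype 𝒳] [Fintype 𝒴] [DecidableEq 𝒯] (p : 𝒳 → 𝒴 → ℝ) (f : 𝒳 → 𝒯) : Prop :=
  ∀ x y, 0 < margX p x →
    p x y / margX p x = probYT p f y (f x) / probT p f (f x)

/-! If `p(y | x') = r` for every `x'` in the support of `p` with `T(x') = t`, then
`p(x', y) = r · p(x')` on the whole fibre (off the support both sides vanish), and summing over
the fibre gives `p(y, T = t) = r · p(T = t)`. Covariate shift plus sufficiency of `T` under
`p_ideal` give exactly this hypothesis for `p_train` with `r = p_ideal(y | T = t)`. -/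

section

variable [Fintype 𝒴] {p : 𝒳 → 𝒴 → ℝ}

theorem margX_nonneg (hp : ∀ x y, 0 ≤ p x y) (x : 𝒳) : 0 ≤ margX p x :=
  sum_nonneg fun y _ => hp x y

theorem le_margX (hp : ∀ x y, 0 ≤ p x y) (x : 𝒳) (y : 𝒴) : p x y ≤ margX p x :=
  single_le_sum (fun y' _ => hp x y') (mem_univ y)

theorem eq_mul_margX_of_div_eq (hp : ∀ x y, 0 ≤ p x y) {x : 𝒳} {y : 𝒴} {r : ℝ}
    (h : 0 < margX p x → p x y / margX p x = r) : p x y = r * margX p x := by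
  rcases (margX_nonneg hp x).lt_or_eq with hpos | hzero
  · rw [← h hpos, div_mul_cancel₀ _ hpos.ne']
  · rw [← hzero, mul_zero]
    exact le_antisymm (hzero ▸ le_margX hp x y) (hp x y)

variable [Fintype 𝒳] [DecidableEq 𝒯]

theorem margX_le_probT (hp : ∀ x y, 0 ≤ p x y) (f : 𝒳 → 𝒯) (x : 𝒳) :
    margX p x ≤ probT p f (f x) := by
  simpa [probT] using single_le_sum (f := fun x' => if f x' = f x then margX p x' else 0)
    (fun x' _ => by split_ifs <;> simp [margX_nonneg hp]) (mem_univ x)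

theorem probYT_eq_mul_probT {f : 𝒳 → 𝒯} {y : 𝒴} {t : 𝒯} {r : ℝ}
    (h : ∀ x, f x = t → p x y = r * margX p x) : probYT p f y t = r * probT p f t := by
  rw [probYT, probT, mul_sum]
  refine sum_congr rfl fun x _ => ?_
  split_ifs with hx
  · exact h x hx
  · rw [mul_zero]

theorem probYT_div_probT_eq_of_div_eq (hp : ∀ x y, 0 ≤ p x y) {f : 𝒳 → 𝒯} {x : 𝒳} {y : 𝒴}
    {r : ℝ} (hx : 0 < margX p x)
    (h : ∀ x', f x' = f x → 0 < margX p x' → p x' y / margX p x' = r) :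
    probYT p f y (f x) / probT p f (f x) = r := by
  have hT : 0 < probT p f (f x) := hx.trans_le (margX_le_probT hp f x)
  rw [probYT_eq_mul_probT fun x' hx' => eq_mul_margX_of_div_eq hp (h x' hx'),
    mul_div_cancel_right₀ _ hT.ne']

end

theorem covariate_shift_cond_on_statistic_eq_general
    {𝒯i : Type*} [Fintype 𝒳] [Fintype 𝒴] [DecidableEq 𝒯i]
    (ptr pid : 𝒳 → 𝒴 → ℝ)
    (htr0 : ∀ x y, 0 ≤ ptr x y)
    (hsupp : ∀ x, 0 < margX ptr x → 0 < margX pid x)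
    (hcond : ∀ x y, 0 < margX ptr x → ptr x y / margX ptr x = pid x y / margX pid x)
    (Tid : 𝒳 → 𝒯i) (hTid : Sufficient pid Tid) :
    ∀ x y, 0 < margX ptr x →
      probYT ptr Tid y (Tid x) / probT ptr Tid (Tid x) =
        probYT pid Tid y (Tid x) / probT pid Tid (Tid x) := by
  intro x y hx
  refine probYT_div_probT_eq_of_div_eq htr0 hx fun x' hx' hpos => ?_
  rw [hcond x' y hpos, hTid x' y (hsupp x' hpos), hx']

/-- Under covariate shift only, if `T_ideal` is sufficient under `p_ideal`,
then for every `x` in the support of `p_train` and every `y`,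
`p_train(y | T_ideal(x)) = p_ideal(y | T_ideal(x))`. -/
theorem covariate_shift_cond_on_statistic_eq
    {𝒯i : Type*} [Fintype 𝒳] [Fintype 𝒴] [DecidableEq 𝒯i]
    (ptr pid : 𝒳 → 𝒴 → ℝ)
    (htr0 : ∀ x y, 0 ≤ ptr x y) (htr1 : ∑ x, ∑ y, ptr x y = 1)
    (hid0 : ∀ x y, 0 ≤ pid x y) (hid1 : ∑ x, ∑ y, pid x y = 1)
    (hsupp : ∀ x, 0 < margX ptr x → 0 < margX pid x)
    (hcond : ∀ x y, 0 < margX ptr x → ptr x y / margX ptr x = pid x y / margX pid x)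
    (Tid : 𝒳 → 𝒯i) (hTid : Sufficient pid Tid) :
    ∀ x y, 0 < margX ptr x →
      probYT ptr Tid y (Tid x) / probT ptr Tid (Tid x) =
        probYT pid Tid y (Tid x) / probT pid Tid (Tid x) :=
  covariate_shift_cond_on_statistic_eq_general ptr pid htr0 hsupp hcond Tid hTid
end
end

section
/- Under covariate shift only (p_train(Y|X) = p_ideal(Y|X) on the support of p_train), if T_ideal is a sufficient statistic under p_ideal and T_train is a minimal sufficient statistic under p_train, then the conditional entropy H_train(T_train(X) | T_ideal(X)) = 0, i.e., T_train(X) is a deterministic function of T_ideal(X) almost surely under p_train. -/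
open Finset

noncomputable section

variable {𝒳 𝒴 𝒯 : Type*}

/-- `T` is a minimal sufficient statistic: it is sufficient, and it is a deterministic
function (almost everywhere w.r.t. `X`) of every other sufficient statistic. -/
def MinimalSufficient {𝒳 𝒴 𝒯 : Type} [Fintype 𝒳] [Fintype 𝒴] [DecidableEq 𝒯]
    (p : 𝒳 → 𝒴 → ℝ) (f : 𝒳 → 𝒯) : Prop :=
  Sufficient p f ∧
    ∀ (U : Type) [DecidableEq U] (S : 𝒳 → U), Sufficient p S →
      ∃ h : U → 𝒯, ∀ x, 0 < margX p x → f x = h (S x)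

/-- Conditional Shannon entropy `H(A(X) | B(X))` of two statistics of `X`,
under the marginal of the joint distribution `p`. -/
def condEntropyStat {𝒳 𝒴 𝒜 ℬ : Type*} [Fintype 𝒳] [Fintype 𝒴] [Fintype 𝒜] [Fintype ℬ]
    [DecidableEq 𝒜] [DecidableEq ℬ] (p : 𝒳 → 𝒴 → ℝ) (A : 𝒳 → 𝒜) (B : 𝒳 → ℬ) : ℝ :=
  -∑ a, ∑ b,
    (∑ x, if A x = a ∧ B x = b then margX p x else 0) *
      Real.log ((∑ x, if A x = a ∧ B x = b then margX p x else 0) /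
        (∑ x, if B x = b then margX p x else 0))

/-- Under covariate shift only, if `T_ideal` is sufficient under `p_ideal`
and `T_train` is minimal sufficient under `p_train`, then
`H_train(T_train(X) | T_ideal(X)) = 0`. -/
theorem covariate_shift_minimal_sufficient_condEntropy_zero
    {𝒳 𝒴 𝒯i 𝒯t : Type} [Fintype 𝒳] [Fintype 𝒴] [Fintype 𝒯i] [Fintype 𝒯t]
    [DecidableEq 𝒯i] [DecidableEq 𝒯t]
    (ptr pid : 𝒳 → 𝒴 → ℝ)
    (htr0 : ∀ x y, 0 ≤ ptr x y) (htr1 : ∑ x, ∑ y, ptr x y = 1)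
    (hid0 : ∀ x y, 0 ≤ pid x y) (hid1 : ∑ x, ∑ y, pid x y = 1)
    (hsupp : ∀ x, 0 < margX ptr x → 0 < margX pid x)
    (hcond : ∀ x y, 0 < margX ptr x → ptr x y / margX ptr x = pid x y / margX pid x)
    (Tid : 𝒳 → 𝒯i) (Ttr : 𝒳 → 𝒯t)
    (hTid : Sufficient pid Tid)
    (hTtr : MinimalSufficient ptr Ttr) :
    condEntropyStat ptr Ttr Tid = 0 := by
  classical
  have hm0 : ∀ x, 0 ≤ margX ptr x := fun x =>
    Finset.sum_nonneg fun y _ => htr0 x y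
  have hple : ∀ x y, ptr x y ≤ margX ptr x := fun x y =>
    Finset.single_le_sum (fun y _ => htr0 x y) (Finset.mem_univ y)
  have hzero : ∀ x, margX ptr x = 0 → ∀ y, ptr x y = 0 := by
    intro x hx y
    have := hple x y
    have := htr0 x y
    linarith
  -- Tid is sufficient under ptr
  have hTidtr : Sufficient ptr Tid := by
    intro x y hx
    set t := Tid x with ht
    set c := probYT pid Tid y t / probT pid Tid t with hc
    have key : ∀ x', Tid x' = t → ptr x' y = c * margX ptr x' := by
      intro x' hx'
      rcases eq_or_lt_of_le (hm0 x') with h0 | h0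
      · rw [hzero x' h0.symm y, ← h0, mul_zero]
      · have hid' := hsupp x' h0
        have h1 := hcond x' y h0
        have h2 := hTid x' y hid'
        rw [hx'] at h2
        have : ptr x' y / margX ptr x' = c := by rw [h1, h2]
        have := (div_eq_iff h0.ne').mp this
        linarith
    have hpos : 0 < probT ptr Tid t := by
      apply Finset.sum_pos' (fun x' _ => by split_ifs; exacts [hm0 x', le_rfl])
      exact ⟨x, Finset.mem_univ x, by rw [if_pos ht.symm]; exact hx⟩
    have hYT : probYT ptr Tid y t = c * probT ptr Tid t := by
      rw [probYT, probT, Finset.mul_sum]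
      apply Finset.sum_congr rfl
      intro x' _
      by_cases hx' : Tid x' = t
      · simp [hx', key x' hx']
      · simp [hx']
    have hself : ptr x y = c * margX ptr x := key x rfl
    rw [hYT, hself, mul_div_assoc, mul_div_assoc,
      div_self hx.ne', div_self hpos.ne']
  -- minimality gives the a.e. function
  obtain ⟨h, hh⟩ := hTtr.2 𝒯i Tid hTidtr
  -- conditional entropy is zero
  rw [condEntropyStat, neg_eq_zero]
  apply Finset.sum_eq_zero
  intro a _
  apply Finset.sum_eq_zero
  intro b _
  set N := ∑ x, if Ttr x = a ∧ Tid x = b then margX ptr x else 0 with hN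
  set D := ∑ x, if Tid x = b then margX ptr x else 0 with hD
  by_cases hN0 : N = 0
  · rw [hN0, zero_mul]
  · have hNpos : 0 < N := lt_of_le_of_ne
      (Finset.sum_nonneg fun x _ => by split_ifs; exacts [hm0 x, le_rfl]) (Ne.symm hN0)
    have hx0 : ∃ x0, (0 : ℝ) < (if Ttr x0 = a ∧ Tid x0 = b then margX ptr x0 else 0) := by
      by_contra hcon
      push_neg at hcon
      have : N ≤ 0 := Finset.sum_nonpos fun x _ => hcon x
      linarith
    obtain ⟨x0, hx0⟩ := hx0
    have hcond0 : Ttr x0 = a ∧ Tid x0 = b := by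
      by_contra hc; simp [hc] at hx0
    have hmx0 : 0 < margX ptr x0 := by
      rw [if_pos hcond0] at hx0; exact hx0
    have hab : a = h b := by
      rw [← hcond0.1, ← hcond0.2]; exact hh x0 hmx0
    have hND : N = D := by
      apply Finset.sum_congr rfl
      intro x _
      by_cases hb : Tid x = b
      · rcases eq_or_lt_of_le (hm0 x) with h0 | h0
        · split_ifs <;> simp [← h0]
        · have : Ttr x = a := by rw [hab, ← hb]; exact hh x h0
          simp [hb, this]
      · simp [hb]
    rw [hND, div_self (by rw [← hND]; exact hN0), Real.log_one, mul_zero]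
end
end

section
/- Under covariate shift only, T_ideal (a sufficient statistic under p_ideal) is also a sufficient statistic of X for Y under p_train; equivalently, I_train(Y; T_ideal(X)) = I_train(Y; X). -/
open Finset

noncomputable section

variable {𝒳 𝒴 𝒯 : Type*}

/-- Conditional Shannon entropy `H(Y | T(X))` under the joint distribution `p`. -/
def condEntropyY [Fintype 𝒳] [Fintype 𝒴] [Fintype 𝒯] [DecidableEq 𝒯]
    (p : 𝒳 → 𝒴 → ℝ) (f : 𝒳 → 𝒯) : ℝ :=
  -∑ t, ∑ y, probYT p f y t * Real.log (probYT p f y t / probT p f t)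

/-- Under covariate shift only, `T_ideal` (sufficient under `p_ideal`)
is also sufficient under `p_train`; equivalently, `I_train(Y; T_ideal(X)) = I_train(Y; X)`. -/
theorem covariate_shift_Tideal_sufficient_for_train
    {𝒯i : Type*} [Fintype 𝒳] [Fintype 𝒴] [Fintype 𝒯i] [DecidableEq 𝒯i]
    (ptr pid : 𝒳 → 𝒴 → ℝ)
    (htr0 : ∀ x y, 0 ≤ ptr x y) (htr1 : ∑ x, ∑ y, ptr x y = 1)
    (hid0 : ∀ x y, 0 ≤ pid x y) (hid1 : ∑ x, ∑ y, pid x y = 1)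
    (hsupp : ∀ x, 0 < margX ptr x → 0 < margX pid x)
    (hcond : ∀ x y, 0 < margX ptr x → ptr x y / margX ptr x = pid x y / margX pid x)
    (Tid : 𝒳 → 𝒯i) (hTid : Sufficient pid Tid) :
    Sufficient ptr Tid ∧
      (-∑ y, (∑ x, ptr x y) * Real.log (∑ x, ptr x y)) - condEntropyY ptr Tid =
        (-∑ y, (∑ x, ptr x y) * Real.log (∑ x, ptr x y)) -
          (-∑ x, ∑ y, ptr x y * Real.log (ptr x y / margX ptr x)) := by
  classical
  have hm0 : ∀ x, 0 ≤ margX ptr x := fun x => Finset.sum_nonneg fun y _ => htr0 x y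
  have hle : ∀ x y, ptr x y ≤ margX ptr x := fun x y =>
    Finset.single_le_sum (fun y _ => htr0 x y) (Finset.mem_univ y)
  have key : ∀ x y, ptr x y =
      margX ptr x * (probYT pid Tid y (Tid x) / probT pid Tid (Tid x)) := by
    intro x y
    by_cases h : 0 < margX ptr x
    · have hne : margX ptr x ≠ 0 := ne_of_gt h
      have h2 := hcond x y h
      have h3 := hTid x y (hsupp x h)
      calc ptr x y = margX ptr x * (ptr x y / margX ptr x) := by field_simp
        _ = _ := by rw [h2, h3]
    · have h0 : margX ptr x = 0 := le_antisymm (not_lt.mp h) (hm0 x)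
      have hz : ptr x y = 0 := le_antisymm (h0 ▸ hle x y) (htr0 x y)
      rw [hz, h0, zero_mul]
  have hPYT : ∀ y t, probYT ptr Tid y t =
      probT ptr Tid t * (probYT pid Tid y t / probT pid Tid t) := by
    intro y t
    unfold probYT probT
    rw [Finset.sum_mul]
    refine Finset.sum_congr rfl fun x _ => ?_
    by_cases h : Tid x = t
    · rw [if_pos h, if_pos h, key x y, h]; rfl
    · rw [if_neg h, if_neg h, zero_mul]
  have hsuf : Sufficient ptr Tid := by
    intro x y hx
    have hTpos : 0 < probT ptr Tid (Tid x) := by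
      have h1 : margX ptr x ≤ probT ptr Tid (Tid x) := by
        unfold probT
        have := Finset.single_le_sum
          (f := fun x' => if Tid x' = Tid x then margX ptr x' else 0)
          (fun i _ => by by_cases h : Tid i = Tid x <;> simp [h, hm0 i]) (Finset.mem_univ x)
        simpa using this
      linarith
    rw [hPYT, key x y, mul_div_cancel_left₀ _ (ne_of_gt hx),
      mul_div_cancel_left₀ _ (ne_of_gt hTpos)]
  refine ⟨hsuf, ?_⟩
  congr 1
  unfold condEntropyY
  congr 1
  calc ∑ t, ∑ y, probYT ptr Tid y t * Real.log (probYT ptr Tid y t / probT ptr Tid t)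
      = ∑ t, ∑ y, ∑ x, (if Tid x = t then
          ptr x y * Real.log (probYT ptr Tid y t / probT ptr Tid t) else 0) := by
        refine Finset.sum_congr rfl fun t _ => Finset.sum_congr rfl fun y _ => ?_
        rw [probYT, Finset.sum_mul]
        exact Finset.sum_congr rfl fun x _ => by split <;> simp
    _ = ∑ t, ∑ x, ∑ y, (if Tid x = t then
          ptr x y * Real.log (probYT ptr Tid y t / probT ptr Tid t) else 0) := by
        exact Finset.sum_congr rfl fun t _ => Finset.sum_comm
    _ = ∑ x, ∑ t, ∑ y, (if Tid x = t then
          ptr x y * Real.log (probYT ptr Tid y t / probT ptr Tid t) else 0) :=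
        Finset.sum_comm
    _ = ∑ x, ∑ y, ∑ t, (if Tid x = t then
          ptr x y * Real.log (probYT ptr Tid y t / probT ptr Tid t) else 0) := by
        exact Finset.sum_congr rfl fun x _ => Finset.sum_comm
    _ = ∑ x, ∑ y, ptr x y * Real.log (ptr x y / margX ptr x) := by
        refine Finset.sum_congr rfl fun x _ => Finset.sum_congr rfl fun y _ => ?_
        rw [Finset.sum_ite_eq]
        simp only [Finset.mem_univ, if_true]
        by_cases hz : ptr x y = 0
        · simp [hz]
        · have hx : 0 < margX ptr x :=
            lt_of_lt_of_le (lt_of_le_of_ne (htr0 x y) (Ne.symm hz)) (hle x y)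
          rw [hsuf x y hx]
end
end

section
/- If the supports of p_train and p_ideal are equal and only covariate shift holds, then any minimal sufficient statistic T_train under p_train is also a minimal sufficient statistic under p_ideal. -/
open Finset

noncomputable section

variable {𝒳 𝒴 𝒯 : Type*}

lemma aux_marg_nonneg {𝒳 𝒴 : Type*} [Fintype 𝒴] (p : 𝒳 → 𝒴 → ℝ)
    (h0 : ∀ x y, 0 ≤ p x y) (x : 𝒳) : 0 ≤ margX p x :=
  Finset.sum_nonneg fun y _ => h0 x y

lemma aux_p_zero {𝒳 𝒴 : Type*} [Fintype 𝒴] (p : 𝒳 → 𝒴 → ℝ)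
    (h0 : ∀ x y, 0 ≤ p x y) {x : 𝒳} (hm : ¬ 0 < margX p x) (y : 𝒴) : p x y = 0 := by
  have hle : margX p x ≤ 0 := not_lt.mp hm
  have hz : margX p x = 0 := le_antisymm hle (aux_marg_nonneg p h0 x)
  exact (Finset.sum_eq_zero_iff_of_nonneg (fun y _ => h0 x y)).mp hz y (Finset.mem_univ y)

/-- Characterization: sufficiency is constancy of conditionals on fibers of `f`
intersected with the support. -/
lemma suff_iff_const {𝒳 𝒴 𝒯 : Type*} [Fintype 𝒳] [Fintype 𝒴] [DecidableEq 𝒯]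
    (p : 𝒳 → 𝒴 → ℝ) (h0 : ∀ x y, 0 ≤ p x y) (f : 𝒳 → 𝒯) :
    Sufficient p f ↔ ∀ x x', 0 < margX p x → 0 < margX p x' → f x = f x' →
      ∀ y, p x y / margX p x = p x' y / margX p x' := by
  constructor
  · intro hs x x' hx hx' hf y
    rw [hs x y hx, hs x' y hx', hf]
  · intro hc x y hx
    have hprobT : 0 < probT p f (f x) := by
      unfold probT
      apply Finset.sum_pos'
      · intro i _
        by_cases h : f i = f x
        · simpa [h] using aux_marg_nonneg p h0 i
        · simp [h]
      · exact ⟨x, Finset.mem_univ x, by simpa using hx⟩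
    have key : probYT p f y (f x) = (p x y / margX p x) * probT p f (f x) := by
      unfold probYT probT
      rw [Finset.mul_sum]
      apply Finset.sum_congr rfl
      intro x' _
      by_cases hfx : f x' = f x
      · simp only [hfx, if_true]
        by_cases hx' : 0 < margX p x'
        · have h1 : p x' y / margX p x' = p x y / margX p x := hc x' x hx' hx hfx y
          calc p x' y = p x' y / margX p x' * margX p x' :=
                (div_mul_cancel₀ _ hx'.ne').symm
            _ = p x y / margX p x * margX p x' := by rw [h1]
        · have hm0 : margX p x' = 0 := le_antisymm (not_lt.mp hx') (aux_marg_nonneg p h0 x')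
          simp [aux_p_zero p h0 hx' y, hm0]
      · simp [hfx]
    rw [key, mul_div_assoc, div_self (ne_of_gt hprobT), mul_one]

/-- If the supports of `p_train` and `p_ideal` are equal and only covariate
shift holds, then any minimal sufficient statistic under `p_train` is also a minimal
sufficient statistic under `p_ideal`. -/
theorem covariate_shift_equal_support_minimal_sufficient
    {𝒳 𝒴 𝒯t : Type} [Fintype 𝒳] [Fintype 𝒴] [Fintype 𝒯t] [DecidableEq 𝒯t]
    (ptr pid : 𝒳 → 𝒴 → ℝ)
    (htr0 : ∀ x y, 0 ≤ ptr x y) (htr1 : ∑ x, ∑ y, ptr x y = 1)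
    (hid0 : ∀ x y, 0 ≤ pid x y) (hid1 : ∑ x, ∑ y, pid x y = 1)
    (hsupp : ∀ x, 0 < margX ptr x ↔ 0 < margX pid x)
    (hcond : ∀ x y, 0 < margX ptr x → ptr x y / margX ptr x = pid x y / margX pid x)
    (Ttr : 𝒳 → 𝒯t)
    (hTtr : MinimalSufficient ptr Ttr) :
    MinimalSufficient pid Ttr := by
  -- sufficiency transfers between ptr and pid
  have transfer : ∀ {𝒯' : Type} [DecidableEq 𝒯'] (f : 𝒳 → 𝒯'),
      Sufficient ptr f ↔ Sufficient pid f := by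
    intro 𝒯' _ f
    rw [suff_iff_const ptr htr0 f, suff_iff_const pid hid0 f]
    constructor
    · intro hc x x' hx hx' hf y
      have hxt := (hsupp x).mpr hx
      have hx't := (hsupp x').mpr hx'
      rw [← hcond x y hxt, ← hcond x' y hx't]
      exact hc x x' hxt hx't hf y
    · intro hc x x' hx hx' hf y
      rw [hcond x y hx, hcond x' y hx']
      exact hc x x' ((hsupp x).mp hx) ((hsupp x').mp hx') hf y
  obtain ⟨hsuff, hmin⟩ := hTtr
  refine ⟨(transfer Ttr).mp hsuff, ?_⟩
  intro U _ S hS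
  obtain ⟨h, hh⟩ := hmin U S ((transfer S).mpr hS)
  exact ⟨h, fun x hx => hh x ((hsupp x).mpr hx)⟩
end
end

section
/- Under the assumption p_θ(x) ∝ p(T_θ(x))^β with β > 0, minimizing the expected negative joint log-likelihood E_{p̂}[−log p_{θ,φ}(x,y)] with an optimal classifier φ is equivalent to minimizing H(Y | T_θ(X)) + β H(T_θ(X)) = −I(Y; T_θ(X)) + β I(X; T_θ(X)), the information bottleneck objective. -/
open Finset

noncomputable section

variable {𝒳 𝒴 𝒯 : Type*}

lemma probYT_pos [Fintype 𝒳] [DecidableEq 𝒯] (p : 𝒳 → 𝒴 → ℝ) (h0 : ∀ x y, 0 ≤ p x y)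
    (f : 𝒳 → 𝒯) (x : 𝒳) (y : 𝒴) (hx : 0 < p x y) : 0 < probYT p f y (f x) := by
  have h : p x y ≤ probYT p f y (f x) := by
    have := Finset.single_le_sum (f := fun x' => if f x' = f x then p x' y else 0)
      (fun x' _ => by by_cases h : f x' = f x <;> simp [h, h0]) (Finset.mem_univ x)
    simpa [probYT] using this
  linarith

lemma probT_pos [Fintype 𝒳] [Fintype 𝒴] [DecidableEq 𝒯] (p : 𝒳 → 𝒴 → ℝ)
    (h0 : ∀ x y, 0 ≤ p x y) (f : 𝒳 → 𝒯) (x : 𝒳) (y : 𝒴) (hx : 0 < p x y) :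
    0 < probT p f (f x) := by
  have hm : 0 < margX p x := by
    have := Finset.single_le_sum (f := fun y' => p x y') (fun y' _ => h0 x y')
      (Finset.mem_univ y)
    have : p x y ≤ margX p x := by simpa [margX] using this
    linarith
  have h : margX p x ≤ probT p f (f x) := by
    have := Finset.single_le_sum (f := fun x' => if f x' = f x then margX p x' else 0)
      (fun x' _ => by
        have : 0 ≤ margX p x' := Finset.sum_nonneg fun y' _ => h0 x' y'
        positivity) (Finset.mem_univ x)
    simpa [probT] using this
  linarith

/-- Under the assumption `p_θ(x) = C · p(T_θ(x))^β` with `β > 0` and an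
optimal classifier `p_φ(y|t) = p̂(y|t)`, the expected negative joint log-likelihood
equals `H(Y | T_θ(X)) + β H(T_θ(X)) − log C`, and
`H(Y|T) + β H(T) = H(Y) − I(Y; T(X)) + β I(X; T(X))` (the information bottleneck
objective, up to the constant `H(Y)`), using `I(X;T(X)) = H(X) + H(T) − H(X,T) = H(T)`. -/
theorem mle_is_information_bottleneck
    [Fintype 𝒳] [Fintype 𝒴] [Fintype 𝒯] [DecidableEq 𝒯]
    (p : 𝒳 → 𝒴 → ℝ) (h0 : ∀ x y, 0 ≤ p x y) (h1 : ∑ x, ∑ y, p x y = 1)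
    (f : 𝒳 → 𝒯) (β C : ℝ) (hβ : 0 < β) (hC : 0 < C) :
    let pmodel : 𝒳 → 𝒴 → ℝ := fun x y =>
      (probYT p f y (f x) / probT p f (f x)) * (C * probT p f (f x) ^ β)
    let HYT := -∑ t, ∑ y, probYT p f y t * Real.log (probYT p f y t / probT p f t)
    let HT := -∑ t, probT p f t * Real.log (probT p f t)
    let HY := -∑ y, (∑ x, p x y) * Real.log (∑ x, p x y)
    let HX := -∑ x, margX p x * Real.log (margX p x)
    let HXT := -∑ x, ∑ t, (if f x = t then margX p x else 0) *
        Real.log (if f x = t then margX p x else 0)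
    (∑ x, ∑ y, p x y * (-Real.log (pmodel x y))) = HYT + β * HT - Real.log C ∧
      HYT + β * HT = (HY - (HY - HYT)) + β * (HX + HT - HXT) := by
  intro pmodel HYT HT HY HX HXT
  -- HXT = HX
  have hHXT : HXT = HX := by
    have : ∀ x : 𝒳, ∑ t, (if f x = t then margX p x else 0) *
        Real.log (if f x = t then margX p x else 0)
        = margX p x * Real.log (margX p x) := by
      intro x
      rw [Finset.sum_eq_single (f x)]
      · simp
      · intro t _ ht; simp [Ne.symm ht]
      · simp
    simp only [HXT, HX, this]
  -- HYT as a sum over x, y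
  have hHYT : HYT = -∑ x, ∑ y, p x y *
      Real.log (probYT p f y (f x) / probT p f (f x)) := by
    have : ∑ t, ∑ y, probYT p f y t * Real.log (probYT p f y t / probT p f t)
        = ∑ x, ∑ y, p x y * Real.log (probYT p f y (f x) / probT p f (f x)) := by
      have step : ∀ t : 𝒯, ∀ y : 𝒴, probYT p f y t * Real.log (probYT p f y t / probT p f t)
          = ∑ x, if f x = t then p x y * Real.log (probYT p f y t / probT p f t) else 0 := by
        intro t y
        rw [probYT, Finset.sum_mul]
        refine Finset.sum_congr rfl fun x _ => ?_
        split <;> simp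
      calc ∑ t, ∑ y, probYT p f y t * Real.log (probYT p f y t / probT p f t)
          = ∑ t, ∑ y, ∑ x, if f x = t then
              p x y * Real.log (probYT p f y t / probT p f t) else 0 := by
            simp only [step]
        _ = ∑ y, ∑ t, ∑ x, if f x = t then
              p x y * Real.log (probYT p f y t / probT p f t) else 0 := Finset.sum_comm
        _ = ∑ y, ∑ x, ∑ t, if f x = t then
              p x y * Real.log (probYT p f y t / probT p f t) else 0 :=
            Finset.sum_congr rfl fun y _ => Finset.sum_comm
        _ = ∑ x, ∑ y, ∑ t, if f x = t then
              p x y * Real.log (probYT p f y t / probT p f t) else 0 := Finset.sum_comm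
        _ = ∑ x, ∑ y, p x y * Real.log (probYT p f y (f x) / probT p f (f x)) := by
            refine Finset.sum_congr rfl fun x _ => Finset.sum_congr rfl fun y _ => ?_
            simp
    simp only [HYT]
    rw [this]
  -- HT as a sum over x, y
  have hHT : HT = -∑ x, ∑ y, p x y * Real.log (probT p f (f x)) := by
    have : ∑ t, probT p f t * Real.log (probT p f t)
        = ∑ x, ∑ y, p x y * Real.log (probT p f (f x)) := by
      calc ∑ t, probT p f t * Real.log (probT p f t)
          = ∑ t, ∑ x, if f x = t then margX p x * Real.log (probT p f t) else 0 := by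
            refine Finset.sum_congr rfl fun t _ => ?_
            rw [probT, Finset.sum_mul]
            refine Finset.sum_congr rfl fun x _ => ?_
            split <;> simp
        _ = ∑ x, ∑ t, if f x = t then margX p x * Real.log (probT p f t) else 0 :=
            Finset.sum_comm
        _ = ∑ x, margX p x * Real.log (probT p f (f x)) := by
            refine Finset.sum_congr rfl fun x _ => ?_; simp
        _ = ∑ x, ∑ y, p x y * Real.log (probT p f (f x)) := by
            refine Finset.sum_congr rfl fun x _ => ?_
            rw [margX, Finset.sum_mul]
    simp only [HT]
    rw [this]
  constructor
  · -- pointwise decomposition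
    have key : ∀ x y, p x y * (-Real.log (pmodel x y))
        = p x y * (-Real.log (probYT p f y (f x) / probT p f (f x)))
          + β * (p x y * (-Real.log (probT p f (f x))))
          - p x y * Real.log C := by
      intro x y
      rcases eq_or_lt_of_le (h0 x y) with h | h
      · simp [← h]
      · have hYT := probYT_pos p h0 f x y h
        have hT := probT_pos p h0 f x y h
        have hq : probYT p f y (f x) / probT p f (f x) ≠ 0 := by positivity
        have hpow : probT p f (f x) ^ β ≠ 0 := by positivity
        simp only [pmodel]
        rw [Real.log_mul hq (by positivity), Real.log_mul hC.ne' hpow,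
          Real.log_rpow hT]
        ring
    calc ∑ x, ∑ y, p x y * (-Real.log (pmodel x y))
        = ∑ x, ∑ y, (p x y * (-Real.log (probYT p f y (f x) / probT p f (f x)))
            + β * (p x y * (-Real.log (probT p f (f x))))
            - p x y * Real.log C) := by
          simp only [key]
      _ = (∑ x, ∑ y, p x y * (-Real.log (probYT p f y (f x) / probT p f (f x))))
            + β * (∑ x, ∑ y, p x y * (-Real.log (probT p f (f x))))
            - (∑ x, ∑ y, p x y) * Real.log C := by
          rw [Finset.sum_mul, Finset.mul_sum]
          rw [← Finset.sum_add_distrib, ← Finset.sum_sub_distrib]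
          refine Finset.sum_congr rfl fun x _ => ?_
          rw [Finset.sum_mul, Finset.mul_sum]
          rw [← Finset.sum_add_distrib, ← Finset.sum_sub_distrib]
      _ = HYT + β * HT - Real.log C := by
          rw [hHYT, hHT, h1]
          simp only [mul_neg, Finset.sum_neg_distrib, one_mul]
  · rw [hHXT]; ring
end
end
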